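/- arXiv:1305.0546 — 2 statements merged into one kernel-verified Lean document; each statement's English description precedes it below -/
import Mathlib

section
/- Let A be a real M×N matrix, τ, σ > 0 with τσ‖AᵀA‖_op < 1. Define the block matrix M acting on pairs u = (x, y) ∈ ℝᴺ × ℝᴹ by uᵀMu = (1/τ)‖x‖² − 2 yᵀAx + (1/σ)‖y‖². Then M is positive definite; more precisely, with C = √(τσ‖AᵀA‖_op), one has (1 − C)·((1/σ)‖y‖² + (1/τ)‖x‖²) ≤ uᵀMu ≤ (1 + C)·((1/σ)‖y‖² + (1/τ)‖x‖²) for all x ∈ ℝᴺ, y ∈ ℝᴹ. -/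
/-!
By Cauchy–Schwarz and the weighted AM–GM inequality,
`2 |⟪y, A x⟫| ≤ 2 ‖A‖ ‖x‖ ‖y‖ ≤ √(τσ) ‖A‖ (‖y‖²/σ + ‖x‖²/τ)`, and `√(τσ) ‖A‖ = C` because
`‖A† A‖ = ‖A‖²`. So the cross term of the quadratic form is at most `C` times its diagonal part,
which gives both bounds, and `C < 1` gives positive definiteness.
-/

open Real
open scoped InnerProductSpace

lemma two_mul_mul_le_sqrt_mul_mul_add {τ σ : ℝ} (hτ : 0 < τ) (hσ : 0 < σ) (a b : ℝ) :
    2 * (a * b) ≤ √(τ * σ) * (1 / σ * b ^ 2 + 1 / τ * a ^ 2) := by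
  set t := √(τ * σ)
  have ht : 0 < t := by positivity
  have ht2 : t ^ 2 = τ * σ := sq_sqrt (by positivity)
  have hgap :
      t * (1 / σ * b ^ 2 + 1 / τ * a ^ 2) - 2 * (a * b) = (t * b - σ * a) ^ 2 / (σ * t) := by
    field_simp
    linear_combination σ * a ^ 2 * ht2
  have : 0 ≤ (t * b - σ * a) ^ 2 / (σ * t) := by positivity
  linarith

section

variable {E F : Type*} [NormedAddCommGroup E] [InnerProductSpace ℝ E]
  [NormedAddCommGroup F] [InnerProductSpace ℝ F]

lemma two_mul_abs_inner_apply_le (A : E →L[ℝ] F) {τ σ : ℝ} (hτ : 0 < τ) (hσ : 0 < σ)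
    (x : E) (y : F) :
    2 * |⟪y, A x⟫_ℝ| ≤ √(τ * σ) * ‖A‖ * (1 / σ * ‖y‖ ^ 2 + 1 / τ * ‖x‖ ^ 2) := by
  calc 2 * |⟪y, A x⟫_ℝ|
      ≤ 2 * (‖y‖ * (‖A‖ * ‖x‖)) := by
        gcongr
        exact (abs_real_inner_le_norm y (A x)).trans (by gcongr; exact A.le_opNorm x)
    _ = ‖A‖ * (2 * (‖x‖ * ‖y‖)) := by ring
    _ ≤ ‖A‖ * (√(τ * σ) * (1 / σ * ‖y‖ ^ 2 + 1 / τ * ‖x‖ ^ 2)) :=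
        mul_le_mul_of_nonneg_left (two_mul_mul_le_sqrt_mul_mul_add hτ hσ _ _) (norm_nonneg A)
    _ = _ := by ring

lemma sqrt_mul_norm_adjoint_comp_self [CompleteSpace E] [CompleteSpace F] (A : E →L[ℝ] F)
    {τ σ : ℝ} (hτ : 0 < τ) (hσ : 0 < σ) :
    √(τ * σ * ‖(ContinuousLinearMap.adjoint A).comp A‖) = √(τ * σ) * ‖A‖ := by
  rw [ContinuousLinearMap.norm_adjoint_comp_self, sqrt_mul (by positivity),
    sqrt_mul_self (norm_nonneg A)]

end

/-- If `τσ‖AᵀA‖_op < 1` then the PDHG matrix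
`M = [[τ⁻¹I, −Aᵀ],[−A, σ⁻¹I]]` (as a quadratic form
`uᵀMu = (1/τ)‖x‖² − 2yᵀAx + (1/σ)‖y‖²`) is positive definite, with
`(1 − C)((1/σ)‖y‖² + (1/τ)‖x‖²) ≤ uᵀMu ≤ (1 + C)((1/σ)‖y‖² + (1/τ)‖x‖²)`
where `C = √(τσ‖AᵀA‖_op)`. -/
theorem stmt_0 {N M : ℕ}
    (A : EuclideanSpace ℝ (Fin N) →L[ℝ] EuclideanSpace ℝ (Fin M))
    (τ σ : ℝ) (hτ : 0 < τ) (hσ : 0 < σ)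
    (hstab : τ * σ * ‖(ContinuousLinearMap.adjoint A).comp A‖ < 1) :
    let C := Real.sqrt (τ * σ * ‖(ContinuousLinearMap.adjoint A).comp A‖)
    ∀ (x : EuclideanSpace ℝ (Fin N)) (y : EuclideanSpace ℝ (Fin M)),
      ((1 - C) * ((1 / σ) * ‖y‖ ^ 2 + (1 / τ) * ‖x‖ ^ 2)
          ≤ (1 / τ) * ‖x‖ ^ 2 - 2 * (inner ℝ y (A x) : ℝ) + (1 / σ) * ‖y‖ ^ 2) ∧
      ((1 / τ) * ‖x‖ ^ 2 - 2 * (inner ℝ y (A x) : ℝ) + (1 / σ) * ‖y‖ ^ 2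
          ≤ (1 + C) * ((1 / σ) * ‖y‖ ^ 2 + (1 / τ) * ‖x‖ ^ 2)) ∧
      ((x, y) ≠ 0 →
        0 < (1 / τ) * ‖x‖ ^ 2 - 2 * (inner ℝ y (A x) : ℝ) + (1 / σ) * ‖y‖ ^ 2) := by
  intro C x y
  have hC1 : C < 1 := (sqrt_lt' one_pos).2 (by rwa [one_pow])
  have hcross : |2 * ⟪y, A x⟫_ℝ| ≤ C * (1 / σ * ‖y‖ ^ 2 + 1 / τ * ‖x‖ ^ 2) := by
    rw [abs_mul, abs_two, show C = √(τ * σ) * ‖A‖ from sqrt_mul_norm_adjoint_comp_self A hτ hσ]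
    exact two_mul_abs_inner_apply_le A hτ hσ x y
  obtain ⟨hlow, hupp⟩ := abs_le.mp hcross
  refine ⟨by linarith, by linarith, fun hxy => ?_⟩
  have hdiag : 0 < 1 / σ * ‖y‖ ^ 2 + 1 / τ * ‖x‖ ^ 2 := by
    rcases not_and_or.mp (Prod.mk_eq_zero.not.mp hxy) with hx | hy
    · have : 0 < ‖x‖ := norm_pos_iff.mpr hx
      positivity
    · have : 0 < ‖y‖ := norm_pos_iff.mpr hy
      positivity
  linarith [mul_pos (sub_pos.2 hC1) hdiag]
end

section
/- Let R : ℝⁿ → ℝⁿ be a monotone operator, M a symmetric n×n real matrix, and suppose points u⋆, u_k, u_{k+1} ∈ ℝⁿ satisfy M(u_{k+1} − u_k) = R(u⋆) − R(u_{k+1}) with R(u⋆) = 0 (more generally, (u⋆ − u_{k+1})ᵀ(R(u⋆) − R(u_{k+1})) ≥ 0 and M(u_{k+1} − u_k) = −R(u_{k+1})). Then ‖u_k − u⋆‖²_M ≥ ‖u_{k+1} − u_k‖²_M + ‖u_{k+1} − u⋆‖²_M, where ‖v‖²_M = vᵀMv. -/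
open scoped RealInnerProductSpace

namespace LinearMap.IsSymmetric

variable {E : Type*} [NormedAddCommGroup E] [InnerProductSpace ℝ E] {T : E →ₗ[ℝ] E}

theorem inner_sub_map_sub (hT : T.IsSymmetric) (x y : E) :
    ⟪x - y, T (x - y)⟫ = ⟪x, T x⟫ - 2 * ⟪x, T y⟫ + ⟪y, T y⟫ := by
  have hyx : ⟪y, T x⟫ = ⟪x, T y⟫ := by rw [← hT, real_inner_comm]
  simp only [map_sub, inner_sub_left, inner_sub_right, hyx]
  ring

/-- Since `uk - ustar = (uk1 - ustar) - (uk1 - uk)`, by `inner_sub_map_sub` it suffices that the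
cross term `⟪uk1 - ustar, T (uk1 - uk)⟫ = -⟪uk1 - ustar, R uk1 - R ustar⟫` is nonpositive. -/
theorem fejer_inequality (hT : T.IsSymmetric) (R : E → E) {ustar uk uk1 : E}
    (hmono : 0 ≤ ⟪uk1 - ustar, R uk1 - R ustar⟫) (hstep : T (uk1 - uk) = R ustar - R uk1) :
    ⟪uk1 - uk, T (uk1 - uk)⟫ + ⟪uk1 - ustar, T (uk1 - ustar)⟫ ≤ ⟪uk - ustar, T (uk - ustar)⟫ := by
  have hcross : ⟪uk1 - ustar, T (uk1 - uk)⟫ = -⟪uk1 - ustar, R uk1 - R ustar⟫ := by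
    rw [hstep, ← inner_neg_right, neg_sub]
  have hdiff : uk - ustar = (uk1 - ustar) - (uk1 - uk) := by abel
  rw [hdiff, hT.inner_sub_map_sub (uk1 - ustar) (uk1 - uk), hcross]
  linarith

end LinearMap.IsSymmetric

theorem stmt_3_general {n : ℕ}
    (R : EuclideanSpace ℝ (Fin n) → EuclideanSpace ℝ (Fin n))
    (hmono : ∀ u v : EuclideanSpace ℝ (Fin n), 0 ≤ (inner ℝ (u - v) (R u - R v) : ℝ))
    (M : EuclideanSpace ℝ (Fin n) →ₗ[ℝ] EuclideanSpace ℝ (Fin n))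
    (hsymm : ∀ u v : EuclideanSpace ℝ (Fin n), (inner ℝ (M u) v : ℝ) = inner ℝ u (M v))
    (ustar uk uk1 : EuclideanSpace ℝ (Fin n))
    (hstep : M (uk1 - uk) = R ustar - R uk1) :
    (inner ℝ (uk - ustar) (M (uk - ustar)) : ℝ)
      ≥ (inner ℝ (uk1 - uk) (M (uk1 - uk)) : ℝ)
        + (inner ℝ (uk1 - ustar) (M (uk1 - ustar)) : ℝ) :=
  LinearMap.IsSymmetric.fejer_inequality hsymm R (hmono uk1 ustar) hstep

/-- Fejér-type inequality. If `R` is monotone, `M` symmetric,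
`R u⋆ = 0`, and `M(u_{k+1} − u_k) = R u⋆ − R u_{k+1}`, then
`‖u_k − u⋆‖²_M ≥ ‖u_{k+1} − u_k‖²_M + ‖u_{k+1} − u⋆‖²_M`. -/
theorem stmt_3 {n : ℕ}
    (R : EuclideanSpace ℝ (Fin n) → EuclideanSpace ℝ (Fin n))
    (hmono : ∀ u v : EuclideanSpace ℝ (Fin n), 0 ≤ (inner ℝ (u - v) (R u - R v) : ℝ))
    (M : EuclideanSpace ℝ (Fin n) →ₗ[ℝ] EuclideanSpace ℝ (Fin n))
    (hsymm : ∀ u v : EuclideanSpace ℝ (Fin n), (inner ℝ (M u) v : ℝ) = inner ℝ u (M v))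
    (ustar uk uk1 : EuclideanSpace ℝ (Fin n))
    (hopt : R ustar = 0)
    (hstep : M (uk1 - uk) = R ustar - R uk1) :
    (inner ℝ (uk - ustar) (M (uk - ustar)) : ℝ)
      ≥ (inner ℝ (uk1 - uk) (M (uk1 - uk)) : ℝ)
        + (inner ℝ (uk1 - ustar) (M (uk1 - ustar)) : ℝ) :=
  stmt_3_general R hmono M hsymm ustar uk uk1 hstep
end
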